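/- arXiv:1212.5773 — 8 statements merged into one kernel-verified Lean document; each statement's English description precedes it below -/
import Mathlib

section
/- Let $a$, $b$, $B$ be as above, and define $F(t) = \int_0^t b(\tau)^2\,d\tau$. Then there exists a constant $C$ depending only on $i_a$ and $s_a$ such that $F(t) \le t\, b(t)^2 \le C\, F(t)$ for all $t \ge 0$. -/
/-!
Write `b t = t * a t` and `g = b ^ 2`. The derivative of `b` is `a (1 + t a' / a) ≥ 0`, so `g` is
nondecreasing on `[0, ∞)`, which gives `∫₀ᵗ g ≤ t g(t)`. Conversely `t g'(t) ≤ (2 + 2 sₐ) g(t)`, so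
`t g(t) - (3 + 2 sₐ) ∫₀ᵗ g` is nonincreasing on `(0, ∞)`; it tends to `0` at `0⁺` because `g` is
bounded near `0`, hence it is `≤ 0`.
-/

open Set Filter Topology MeasureTheory intervalIntegral

theorem integral_le_mul_of_monotoneOn {f : ℝ → ℝ} {a b : ℝ} (hab : a ≤ b)
    (hf : MonotoneOn f (Icc a b)) : ∫ x in a..b, f x ≤ (b - a) * f b := by
  have hint : IntervalIntegrable f volume a b := by
    apply MonotoneOn.intervalIntegrable
    rwa [uIcc_of_le hab]
  calc ∫ x in a..b, f x ≤ ∫ _ in a..b, f b :=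
        integral_mono_on hab hint intervalIntegrable_const
          fun x hx => hf hx (right_mem_Icc.2 hab) hx.2
    _ = (b - a) * f b := by simp

theorem monotoneOn_Ioi_of_hasDerivAt_nonneg {f f' : ℝ → ℝ} {c : ℝ}
    (hf : ∀ x > c, HasDerivAt f (f' x) x) (hf' : ∀ x > c, 0 ≤ f' x) :
    MonotoneOn f (Ioi c) := by
  refine monotoneOn_of_hasDerivWithinAt_nonneg (convex_Ioi c) (f' := f')
    (fun x hx => (hf x hx).continuousAt.continuousWithinAt) ?_ ?_ <;> rw [interior_Ioi]
  exacts [fun x hx => (hf x hx).hasDerivWithinAt, hf']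

theorem tendsto_mul_nhdsGT_zero_of_monotoneOn {g : ℝ → ℝ} (hg : MonotoneOn g (Ici 0)) :
    Tendsto (fun s => s * g s) (𝓝[>] 0) (𝓝 0) := by
  refine (tendsto_nhdsWithin_of_tendsto_nhds tendsto_id).zero_mul_isBoundedUnder_le ?_
  refine isBoundedUnder_of_eventually_le (a := max |g 0| |g 1|) ?_
  filter_upwards [Ioc_mem_nhdsGT zero_lt_one] with s hs
  exact abs_le_max_abs_abs (hg self_mem_Ici hs.1.le hs.1.le)
    (hg hs.1.le (mem_Ici.2 zero_le_one) hs.2)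

theorem mul_le_mul_integral_of_mul_deriv_le {g g' : ℝ → ℝ} {K t : ℝ}
    (hmono : MonotoneOn g (Ici 0)) (hderiv : ∀ u > 0, HasDerivAt g (g' u) u)
    (hK : ∀ u > 0, u * g' u ≤ K * g u) (ht : 0 ≤ t) :
    t * g t ≤ (1 + K) * ∫ u in 0..t, g u := by
  rcases ht.eq_or_lt with rfl | ht
  · simp
  have hint : ∀ u ≥ 0, IntervalIntegrable g volume 0 u := fun u hu =>
    (hmono.mono (by rw [uIcc_of_le hu]; exact Icc_subset_Ici_self)).intervalIntegrable
  have hcont : ContinuousOn g (Ioi 0) := fun u hu =>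
    (hderiv u hu).continuousAt.continuousWithinAt
  set F : ℝ → ℝ := fun u => ∫ x in 0..u, g x
  have hF : ∀ u > 0, HasDerivAt F (g u) u := fun u hu =>
    integral_hasDerivAt_right (hint u hu.le) (hcont.stronglyMeasurableAtFilter isOpen_Ioi u hu)
      (hderiv u hu).continuousAt
  have hF0 : Tendsto F (𝓝[>] 0) (𝓝 0) := by
    have := (continuousOn_primitive_interval' (hint 1 zero_le_one) left_mem_uIcc) 0 left_mem_uIcc
    rw [uIcc_of_le zero_le_one] at this
    simpa [F] using ((this.mono_of_mem_nhdsWithin (Icc_mem_nhdsGE zero_lt_one)).mono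
      Ioi_subset_Ici_self).tendsto
  set H : ℝ → ℝ := fun u => (1 + K) * F u - u * g u
  have hH : ∀ u > 0, HasDerivAt H ((1 + K) * g u - (1 * g u + u * g' u)) u := fun u hu =>
    ((hF u hu).const_mul _).sub ((hasDerivAt_id u).mul (hderiv u hu))
  have hHmono : MonotoneOn H (Ioi 0) :=
    monotoneOn_Ioi_of_hasDerivAt_nonneg hH fun u hu => by linarith [hK u hu]
  have hH0 : Tendsto H (𝓝[>] 0) (𝓝 0) := by
    simpa using (hF0.const_mul (1 + K)).sub (tendsto_mul_nhdsGT_zero_of_monotoneOn hmono)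
  have : 0 ≤ H t := le_of_tendsto hH0 <| by
    filter_upwards [Ioo_mem_nhdsGT ht] with s hs
    exact hHmono hs.1 ht hs.2.le
  simpa [H, sub_nonneg] using this

section
variable {a a' : ℝ → ℝ}

theorem hasDerivAt_id_mul {t : ℝ} (ha : HasDerivAt a (a' t) t) :
    HasDerivAt (fun τ => τ * a τ) (a t + t * a' t) t := by
  simpa using (hasDerivAt_id' t).fun_mul ha

theorem monotoneOn_id_mul_of_neg_one_le (hpos : ∀ t > 0, 0 < a t)
    (hda : ∀ t > 0, HasDerivAt a (a' t) t) (hel : ∀ t > 0, -1 ≤ t * a' t / a t) :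
    MonotoneOn (fun t => t * a t) (Ioi 0) := by
  refine monotoneOn_Ioi_of_hasDerivAt_nonneg (fun t ht => hasDerivAt_id_mul (hda t ht))
    fun t ht => ?_
  linarith [(le_div_iff₀ (hpos t ht)).1 (hel t ht)]

theorem monotoneOn_sq_id_mul (hpos : ∀ t > 0, 0 < a t)
    (hmono : MonotoneOn (fun t => t * a t) (Ioi 0)) :
    MonotoneOn (fun t => (t * a t) ^ 2) (Ici 0) := by
  intro x hx y hy hxy
  rcases (mem_Ici.1 hx).eq_or_lt with rfl | hx
  · simpa using sq_nonneg (y * a y)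
  exact pow_le_pow_left₀ (mul_pos hx (hpos x hx)).le (hmono hx (hx.trans_le hxy) hxy) 2

theorem mul_deriv_sq_id_mul_le {s t : ℝ} (ht : 0 < t) (hat : 0 < a t)
    (hel : t * a' t / a t ≤ s) :
    t * (2 * (t * a t) * (a t + t * a' t)) ≤ (2 + 2 * s) * (t * a t) ^ 2 := by
  have h := (div_le_iff₀ hat).1 hel
  have htt : 0 ≤ t * t * a t := by positivity
  nlinarith [mul_le_mul_of_nonneg_left h htt]

end

theorem stmt_3_general (a : ℝ → ℝ) (hapos : ∀ t > 0, 0 < a t)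
    (haC1 : ContDiffOn ℝ 1 a (Set.Ioi 0))
    (ia sa : ℝ) (hia : -1 < ia)
    (hinf : ∀ t > 0, ia ≤ t * deriv a t / a t)
    (hsup : ∀ t > 0, t * deriv a t / a t ≤ sa) :
    ∃ C : ℝ, ∀ t ≥ 0,
      (∫ τ in (0:ℝ)..t, (τ * a τ)^2) ≤ t * (t * a t)^2 ∧
      t * (t * a t)^2 ≤ C * ∫ τ in (0:ℝ)..t, (τ * a τ)^2 := by
  have hda : ∀ t > 0, HasDerivAt a (deriv a t) t := fun t ht =>
    ((haC1.differentiableOn one_ne_zero).differentiableAt (Ioi_mem_nhds ht)).hasDerivAt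
  have hmono : MonotoneOn (fun t => (t * a t) ^ 2) (Ici 0) :=
    monotoneOn_sq_id_mul hapos <| monotoneOn_id_mul_of_neg_one_le hapos hda
      fun t ht => hia.le.trans (hinf t ht)
  refine ⟨1 + (2 + 2 * sa), fun t ht => ⟨?_, ?_⟩⟩
  · simpa using integral_le_mul_of_monotoneOn ht (hmono.mono Icc_subset_Ici_self)
  · refine mul_le_mul_integral_of_mul_deriv_le hmono
      (fun u hu => by simpa using (hasDerivAt_id_mul (hda u hu)).fun_pow 2)
      (fun u hu => mul_deriv_sq_id_mul_le hu (hapos u hu) (hsup u hu)) ht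

theorem stmt_3 (a : ℝ → ℝ) (hapos : ∀ t > 0, 0 < a t)
    (haC1 : ContDiffOn ℝ 1 a (Set.Ioi 0))
    (ia sa : ℝ) (hia : -1 < ia) (hisa : ia ≤ sa)
    (hinf : ∀ t > 0, ia ≤ t * deriv a t / a t)
    (hsup : ∀ t > 0, t * deriv a t / a t ≤ sa) :
    ∃ C : ℝ, ∀ t ≥ 0,
      (∫ τ in (0:ℝ)..t, (τ * a τ)^2) ≤ t * (t * a t)^2 ∧
      t * (t * a t)^2 ≤ C * ∫ τ in (0:ℝ)..t, (τ * a τ)^2 :=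
  stmt_3_general a hapos haC1 ia sa hia hinf hsup
end

section
/- Let $a$ be $C^1$ on $(0,\infty)$ with $-1 < i_a \le s_a < \infty$, $b(t) = a(t)t$, and $H(t) = \int_0^t a(\tau)b(\tau)\,d\tau$. Then there exist positive constants $C_1$ depending only on $i_a$ and $C_2$ depending only on $i_a, s_a$ such that $C_1 H(t) \le b(t)^2 \le C_2 H(t)$ for all $t \ge 0$. -/
/-!
With `b t = t a(t)` one has `(b²)' = 2 b (a + t a') = 2 a b (1 + t a'/a)`, so the index
bounds give `2(1 + i_a) a b ≤ (b²)' ≤ 2(1 + s_a) a b` on `(0, ∞)`; integrating over `[0, t]`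
gives the claim with `C₁ = 2(1 + i_a)` and `C₂ = 2(1 + s_a)`. The fundamental theorem of
calculus applies down to `0` because `(b²)' ≥ 0` is then automatically integrable, and because
`b(0⁺) = 0`: the lower index bound makes `a(t) t^(-i_a)` nondecreasing, so
`b(t) ≤ a(1) t^(1 + i_a)` on `(0, 1]`.
-/

open Set MeasureTheory Filter Topology intervalIntegral

section Comparison

variable {f g g' : ℝ → ℝ} {a b c C : ℝ}

theorem integral_deriv_eq_sub_of_nonneg (hab : a ≤ b) (hg : ContinuousOn g (Icc a b))
    (hderiv : ∀ x ∈ Ioo a b, HasDerivAt g (g' x) x) (hg' : ∀ x ∈ Ioo a b, 0 ≤ g' x) :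
    IntervalIntegrable g' volume a b ∧ ∫ x in a..b, g' x = g b - g a := by
  have hint : IntervalIntegrable g' volume a b :=
    (intervalIntegrable_iff_integrableOn_Ioc_of_le hab).mpr
      (integrableOn_deriv_of_nonneg hg hderiv hg')
  exact ⟨hint, integral_eq_sub_of_hasDerivAt_of_le hab hg hderiv hint⟩

theorem intervalIntegrable_of_mul_le_deriv (hab : a ≤ b) (hc : 0 < c)
    (hg : ContinuousOn g (Icc a b)) (hderiv : ∀ x ∈ Ioo a b, HasDerivAt g (g' x) x)
    (hf : ContinuousOn f (Ioo a b)) (hf0 : ∀ x ∈ Ioo a b, 0 ≤ f x)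
    (hle : ∀ x ∈ Ioo a b, c * f x ≤ g' x) :
    IntervalIntegrable f volume a b := by
  have hg' : IntegrableOn g' (Ioo a b) :=
    (integrableOn_deriv_of_nonneg hg hderiv fun x hx =>
      (mul_nonneg hc.le (hf0 x hx)).trans (hle x hx)).mono_set Ioo_subset_Ioc_self
  rw [intervalIntegrable_iff_integrableOn_Ioo_of_le hab]
  refine (hg'.div_const c).mono' (hf.aestronglyMeasurable measurableSet_Ioo) ?_
  rw [ae_restrict_iff' measurableSet_Ioo]
  filter_upwards with x hx
  rw [Real.norm_of_nonneg (hf0 x hx), le_div_iff₀' hc]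
  exact hle x hx

theorem mul_integral_le_sub_of_mul_le_deriv (hab : a ≤ b) (hc : 0 < c)
    (hg : ContinuousOn g (Icc a b)) (hderiv : ∀ x ∈ Ioo a b, HasDerivAt g (g' x) x)
    (hf : ContinuousOn f (Ioo a b)) (hf0 : ∀ x ∈ Ioo a b, 0 ≤ f x)
    (hle : ∀ x ∈ Ioo a b, c * f x ≤ g' x) :
    c * ∫ x in a..b, f x ≤ g b - g a := by
  obtain ⟨hg'int, hftc⟩ := integral_deriv_eq_sub_of_nonneg hab hg hderiv fun x hx =>
    (mul_nonneg hc.le (hf0 x hx)).trans (hle x hx)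
  rw [← hftc, ← intervalIntegral.integral_const_mul]
  exact intervalIntegral.integral_mono_on_of_le_Ioo hab
    ((intervalIntegrable_of_mul_le_deriv hab hc hg hderiv hf hf0 hle).const_mul c) hg'int hle

theorem sub_le_mul_integral_of_deriv_le (hab : a ≤ b) (hg : ContinuousOn g (Icc a b))
    (hderiv : ∀ x ∈ Ioo a b, HasDerivAt g (g' x) x) (hg' : ∀ x ∈ Ioo a b, 0 ≤ g' x)
    (hf : IntervalIntegrable f volume a b) (hle : ∀ x ∈ Ioo a b, g' x ≤ C * f x) :
    g b - g a ≤ C * ∫ x in a..b, f x := by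
  obtain ⟨hg'int, hftc⟩ := integral_deriv_eq_sub_of_nonneg hab hg hderiv hg'
  rw [← hftc, ← intervalIntegral.integral_const_mul]
  exact intervalIntegral.integral_mono_on_of_le_Ioo hab hg'int (hf.const_mul C) hle

end Comparison

section LowerIndex

variable {a : ℝ → ℝ} {p : ℝ}

theorem monotoneOn_mul_rpow_neg (ha : DifferentiableOn ℝ a (Ioi 0))
    (hp : ∀ x > 0, p * a x ≤ x * deriv a x) :
    MonotoneOn (fun x => a x * x ^ (-p)) (Ioi 0) := by
  have hderiv : ∀ x ∈ Ioi (0 : ℝ), HasDerivAt (fun x => a x * x ^ (-p))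
      (deriv a x * x ^ (-p) + a x * (-p * x ^ (-p - 1))) x := fun x hx =>
    ((ha x hx).differentiableAt (isOpen_Ioi.mem_nhds hx)).hasDerivAt.mul
      (Real.hasDerivAt_rpow_const (Or.inl hx.ne'))
  refine monotoneOn_of_hasDerivWithinAt_nonneg (convex_Ioi 0)
    (fun x hx => (hderiv x hx).continuousAt.continuousWithinAt)
    (fun x hx => (hderiv x (interior_subset hx)).hasDerivWithinAt) fun x hx => ?_
  rw [interior_Ioi] at hx
  have hsplit : x ^ (-p) = x ^ (-p - 1) * x := by
    rw [← Real.rpow_add_one hx.ne']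
    ring_nf
  -- the derivative is `x ^ (-p - 1) * (x a'(x) - p a(x))`
  rw [hsplit]
  nlinarith [mul_nonneg (Real.rpow_pos_of_pos hx (-p - 1)).le (sub_nonneg.mpr (hp x hx))]

theorem le_mul_rpow_of_mem_Ioc (ha : DifferentiableOn ℝ a (Ioi 0))
    (hp : ∀ x > 0, p * a x ≤ x * deriv a x) {x : ℝ} (hx : x ∈ Ioc 0 1) :
    a x ≤ a 1 * x ^ p := by
  have hmono := monotoneOn_mul_rpow_neg ha hp hx.1 (mem_Ioi.mpr one_pos) hx.2
  simp only [Real.one_rpow, mul_one] at hmono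
  calc a x = a x * x ^ (-p) * x ^ p := by
        rw [mul_assoc, ← Real.rpow_add hx.1, neg_add_cancel, Real.rpow_zero, mul_one]
    _ ≤ a 1 * x ^ p := mul_le_mul_of_nonneg_right hmono (Real.rpow_pos_of_pos hx.1 p).le

theorem tendsto_mul_apply_nhdsGT_zero (ha : DifferentiableOn ℝ a (Ioi 0))
    (ha0 : ∀ x > 0, 0 ≤ a x) (hp : ∀ x > 0, p * a x ≤ x * deriv a x) (hp1 : -1 < p) :
    Tendsto (fun x => x * a x) (𝓝[>] 0) (𝓝 0) := by
  have hpow : Tendsto (fun x : ℝ => a 1 * x ^ (p + 1)) (𝓝[>] 0) (𝓝 0) := by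
    have h := (Real.continuousAt_rpow_const 0 (p + 1) (Or.inr (by linarith))).tendsto
    rw [Real.zero_rpow (by linarith)] at h
    simpa using (h.mono_left nhdsWithin_le_nhds).const_mul (a 1)
  refine squeeze_zero' ?_ ?_ hpow
  · filter_upwards [self_mem_nhdsWithin] with x hx using mul_nonneg (le_of_lt hx) (ha0 x hx)
  · filter_upwards [Ioc_mem_nhdsGT one_pos] with x hx
    calc x * a x ≤ x * (a 1 * x ^ p) :=
          mul_le_mul_of_nonneg_left (le_mul_rpow_of_mem_Ioc ha hp hx) hx.1.le
      _ = a 1 * x ^ (p + 1) := by rw [Real.rpow_add_one hx.1.ne']; ring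

theorem continuousOn_mul_apply_Ici (ha : DifferentiableOn ℝ a (Ioi 0))
    (ha0 : ∀ x > 0, 0 ≤ a x) (hp : ∀ x > 0, p * a x ≤ x * deriv a x) (hp1 : -1 < p) :
    ContinuousOn (fun x => x * a x) (Ici 0) := by
  intro x hx
  rcases (mem_Ici.mp hx).eq_or_lt with rfl | hx0
  · refine continuousWithinAt_Ioi_iff_Ici.mp ?_
    simpa [ContinuousWithinAt] using tendsto_mul_apply_nhdsGT_zero ha ha0 hp hp1
  · exact (continuousAt_id.mul ((ha x hx0).continuousWithinAt.continuousAt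
      (isOpen_Ioi.mem_nhds hx0))).continuousWithinAt

end LowerIndex

theorem hasDerivAt_sq_mul_apply {a : ℝ → ℝ} {x : ℝ} (ha : DifferentiableAt ℝ a x) :
    HasDerivAt (fun x => (x * a x) ^ 2) (2 * (x * a x) * (a x + x * deriv a x)) x := by
  have hb : HasDerivAt (fun x => x * a x) (1 * a x + x * deriv a x) x :=
    (hasDerivAt_id x).mul ha.hasDerivAt
  exact (hb.fun_pow 2).congr_deriv (by ring)

theorem stmt_4 (a : ℝ → ℝ) (hapos : ∀ t > 0, 0 < a t)
    (haC1 : ContDiffOn ℝ 1 a (Set.Ioi 0))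
    (ia sa : ℝ) (hia : -1 < ia) (hisa : ia ≤ sa)
    (hinf : ∀ t > 0, ia ≤ t * deriv a t / a t)
    (hsup : ∀ t > 0, t * deriv a t / a t ≤ sa) :
    ∃ C₁ > (0:ℝ), ∃ C₂ > (0:ℝ), ∀ t ≥ 0,
      C₁ * (∫ τ in (0:ℝ)..t, a τ * (τ * a τ)) ≤ (t * a t)^2 ∧
      (t * a t)^2 ≤ C₂ * ∫ τ in (0:ℝ)..t, a τ * (τ * a τ) := by
  have hda : DifferentiableOn ℝ a (Ioi 0) := haC1.differentiableOn one_ne_zero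
  have hlow x (hx : 0 < x) : ia * a x ≤ x * deriv a x :=
    (le_div_iff₀ (hapos x hx)).mp (hinf x hx)
  have hupp x (hx : 0 < x) : x * deriv a x ≤ sa * a x :=
    (div_le_iff₀ (hapos x hx)).mp (hsup x hx)
  refine ⟨2 * (1 + ia), by linarith, 2 * (1 + sa), by linarith, fun t ht => ?_⟩
  have hg : ContinuousOn (fun x => (x * a x) ^ 2) (Icc 0 t) :=
    ((continuousOn_mul_apply_Ici hda (fun x hx => (hapos x hx).le) hlow hia).mono
      Icc_subset_Ici_self).pow 2
  have hderiv x (hx : x ∈ Ioo 0 t) := hasDerivAt_sq_mul_apply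
    ((hda x hx.1).differentiableAt (isOpen_Ioi.mem_nhds hx.1))
  have hca : ContinuousOn a (Ioo 0 t) := hda.continuousOn.mono fun x hx => hx.1
  have hf : ContinuousOn (fun x => a x * (x * a x)) (Ioo 0 t) := hca.mul (continuousOn_id.mul hca)
  have hxa x (hx : x ∈ Ioo 0 t) : 0 ≤ x * a x := mul_nonneg hx.1.le (hapos x hx.1).le
  have hf0 x (hx : x ∈ Ioo 0 t) : 0 ≤ a x * (x * a x) := mul_nonneg (hapos x hx.1).le (hxa x hx)
  have hderiv_ge x (hx : x ∈ Ioo 0 t) :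
      2 * (1 + ia) * (a x * (x * a x)) ≤ 2 * (x * a x) * (a x + x * deriv a x) := by
    nlinarith [mul_nonneg (hxa x hx) (sub_nonneg.mpr (hlow x hx.1))]
  have hderiv_le x (hx : x ∈ Ioo 0 t) :
      2 * (x * a x) * (a x + x * deriv a x) ≤ 2 * (1 + sa) * (a x * (x * a x)) := by
    nlinarith [mul_nonneg (hxa x hx) (sub_nonneg.mpr (hupp x hx.1))]
  have lower := mul_integral_le_sub_of_mul_le_deriv ht (by linarith) hg hderiv hf hf0 hderiv_ge
  have upper := sub_le_mul_integral_of_deriv_le ht hg hderiv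
    (fun x hx => (mul_nonneg (by linarith) (hf0 x hx)).trans (hderiv_ge x hx))
    (intervalIntegrable_of_mul_le_deriv ht (by linarith) hg hderiv hf hf0 hderiv_ge) hderiv_le
  simp only [zero_mul, zero_pow two_ne_zero, sub_zero] at lower upper
  exact ⟨lower, upper⟩
end

section
/- Let $a : (0,\infty)\to(0,\infty)$ be $C^1$ with $-1 < i_a \le s_a < \infty$. Then for all $\xi, \eta \in \mathbb{R}^{Nn}$, $[a(|\xi|)\xi - a(|\eta|)\eta] \cdot (\xi - \eta) \ge (1+\min\{i_a,0\})\, |\xi - \eta|^2 \int_0^1 a(|\eta + s(\xi - \eta)|)\,ds$. -/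
/-!
Put `v = ξ - η`, `γ s = η + s v` and `f s = ⟪a(|γ s|) γ s, v⟫`, so that the left-hand side is
`f 1 - f 0`. Wherever `γ s ≠ 0`,
`f' s = a(r) |v|² + a'(r) ⟪γ s, v⟫² / r` with `r = |γ s|`,
and `r a'(r) ≥ i_a a(r)` together with Cauchy–Schwarz bounds this from below by
`(1 + min i_a 0) |v|² a(r)`. The line `γ` meets the origin at most once, and there `f` is still
continuous: `t ↦ a(t) t^{-i_a}` is increasing, so `t a(t) ≤ a(1) t^{1 + i_a} → 0` as `t → 0`.
Integrating the bound gives the claim.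
-/

open MeasureTheory Set Filter Topology
open scoped RealInnerProductSpace

section Growth

variable {a : ℝ → ℝ} {i : ℝ}

theorem monotoneOn_mul_rpow_neg_s7 (hd : ∀ t > 0, HasDerivAt a (deriv a t) t)
    (hi : ∀ t > 0, i * a t ≤ t * deriv a t) :
    MonotoneOn (fun t => a t * t ^ (-i)) (Ioi 0) := by
  have hderiv : ∀ t > (0 : ℝ), HasDerivAt (fun t => a t * t ^ (-i))
      (t ^ (-i - 1) * (t * deriv a t - i * a t)) t := by
    intro t ht
    refine ((hd t ht).mul (Real.hasDerivAt_rpow_const (Or.inl ht.ne'))).congr_deriv ?_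
    rw [show t ^ (-i) = t ^ (-i - 1) * t by rw [← Real.rpow_add_one ht.ne']; norm_num]
    ring
  refine monotoneOn_of_deriv_nonneg (convex_Ioi 0)
    (fun t ht => (hderiv t ht).continuousAt.continuousWithinAt) ?_ ?_
  · rw [interior_Ioi]
    exact fun t ht => (hderiv t ht).differentiableAt.differentiableWithinAt
  · rw [interior_Ioi]
    intro t ht
    rw [(hderiv t ht).deriv]
    exact mul_nonneg (Real.rpow_nonneg (le_of_lt ht) _) (sub_nonneg.2 (hi t ht))

theorem le_mul_rpow_of_le_one (hd : ∀ t > 0, HasDerivAt a (deriv a t) t)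
    (hi : ∀ t > 0, i * a t ≤ t * deriv a t) {t : ℝ} (ht₀ : 0 < t) (ht₁ : t ≤ 1) :
    a t ≤ a 1 * t ^ i := by
  have h := monotoneOn_mul_rpow_neg_s7 hd hi ht₀ (mem_Ioi.2 one_pos) ht₁
  simp only [Real.one_rpow, mul_one] at h
  calc a t = a t * t ^ (-i) * t ^ i := by rw [mul_assoc, ← Real.rpow_add ht₀]; simp
    _ ≤ a 1 * t ^ i := by gcongr

end Growth

theorem continuous_smul_norm {E : Type*} [NormedAddCommGroup E] [NormedSpace ℝ E]
    {a : ℝ → ℝ} {i C : ℝ} (ha : ContinuousOn a (Ioi 0)) (hi : -1 < i)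
    (hbound : ∀ t ∈ Ioc (0 : ℝ) 1, |a t| ≤ C * t ^ i) :
    Continuous fun x : E => a ‖x‖ • x := by
  refine continuous_iff_continuousAt.2 fun x => ?_
  rcases eq_or_ne x 0 with rfl | hx
  · have hexp : (0 : ℝ) < 1 + i := by linarith
    have hlim : Tendsto (fun y : E => C * ‖y‖ ^ (1 + i)) (𝓝 0) (𝓝 0) := by
      have h := (Real.continuousAt_rpow_const 0 (1 + i) (Or.inr hexp.le)).tendsto.comp
        (tendsto_norm_zero (E := E))
      simpa [Function.comp_def, Real.zero_rpow hexp.ne'] using h.const_mul C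
    have hle : ∀ᶠ y in 𝓝 (0 : E), ‖a ‖y‖ • y‖ ≤ C * ‖y‖ ^ (1 + i) := by
      filter_upwards [Metric.closedBall_mem_nhds (0 : E) one_pos] with y hy
      rcases eq_or_ne y 0 with rfl | hy₀
      · simp [Real.zero_rpow hexp.ne']
      · have hpos := norm_pos_iff.2 hy₀
        calc ‖a ‖y‖ • y‖ = |a ‖y‖| * ‖y‖ := by rw [norm_smul, Real.norm_eq_abs]
          _ ≤ C * ‖y‖ ^ i * ‖y‖ := by gcongr; exact hbound _ ⟨hpos, by simpa using hy⟩
          _ = C * ‖y‖ ^ (1 + i) := by rw [Real.rpow_add hpos, Real.rpow_one]; ring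
    simpa [ContinuousAt] using squeeze_zero_norm' hle hlim
  · exact ((ha.continuousAt (Ioi_mem_nhds (norm_pos_iff.2 hx))).comp
      continuous_norm.continuousAt).smul continuousAt_id

section InnerProductSpace

variable {E : Type*} [NormedAddCommGroup E] [InnerProductSpace ℝ E]

theorem HasDerivAt.norm_of_ne_zero {f : ℝ → E} {f' : E} {x : ℝ} (hf : HasDerivAt f f' x)
    (h₀ : f x ≠ 0) : HasDerivAt (fun t => ‖f t‖) (⟪f x, f'⟫ / ‖f x‖) x := by
  have hpos : 0 < ‖f x‖ := norm_pos_iff.2 h₀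
  have h := hf.norm_sq.sqrt (by positivity)
  simp only [Real.sqrt_sq_eq_abs, abs_norm] at h
  convert h using 1
  field_simp

theorem hasDerivAt_inner_smul_norm_add_smul {a : ℝ → ℝ} {a' : ℝ} {η v : E} {s : ℝ}
    (hγ : η + s • v ≠ 0) (ha : HasDerivAt a a' ‖η + s • v‖) :
    HasDerivAt (fun s : ℝ => ⟪a ‖η + s • v‖ • (η + s • v), v⟫)
      (a ‖η + s • v‖ * ‖v‖ ^ 2 + a' * ⟪η + s • v, v⟫ ^ 2 / ‖η + s • v‖) s := by
  have hline : HasDerivAt (fun s : ℝ => η + s • v) v s := by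
    simpa using ((hasDerivAt_id s).smul_const v).const_add η
  have h := ((ha.comp s (hline.norm_of_ne_zero hγ)).smul hline).inner ℝ (hasDerivAt_const s v)
  refine h.congr_deriv ?_
  simp only [Function.comp_apply, inner_zero_right, zero_add, inner_add_left, real_inner_smul_left,
    real_inner_self_eq_norm_sq]
  field_simp

theorem subsingleton_setOf_add_smul_eq_zero {η v : E} (hv : v ≠ 0) :
    {s : ℝ | η + s • v = 0}.Subsingleton := by
  intro s hs t ht
  have h : (s - t) • v = 0 := by
    rw [sub_smul, ← add_sub_add_left_eq_sub _ _ η, hs.out, ht.out, sub_zero]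
  exact sub_eq_zero.1 ((smul_eq_zero.1 h).resolve_right hv)

end InnerProductSpace

theorem one_add_min_mul_le_add_mul_sq_div {i α D r p w : ℝ} (hr : 0 < r) (hα : 0 < α)
    (hD : i * α ≤ r * D) (hp : |p| ≤ r * w) :
    (1 + min i 0) * w ^ 2 * α ≤ α * w ^ 2 + D * p ^ 2 / r := by
  have hp2 : p ^ 2 ≤ r ^ 2 * w ^ 2 := by
    rw [← sq_abs, ← mul_pow]; exact pow_le_pow_left₀ (abs_nonneg p) hp 2
  rcases le_or_gt 0 D with hD₀ | hD₀
  · have : 0 ≤ D * p ^ 2 / r := by positivity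
    nlinarith [mul_nonpos_of_nonpos_of_nonneg (min_le_right i 0)
      (mul_nonneg (sq_nonneg w) hα.le)]
  · have hrD : r * D * w ^ 2 ≤ D * p ^ 2 / r := by
      rw [le_div_iff₀ hr]; nlinarith
    nlinarith [mul_le_mul_of_nonneg_right (min_le_left i 0) (mul_nonneg (sq_nonneg w) hα.le),
      mul_le_mul_of_nonneg_right hD (sq_nonneg w)]

theorem integral_le_sub_of_hasDerivAt_of_le {f F φ : ℝ → ℝ} {a b : ℝ} (hab : a ≤ b)
    (hf : ContinuousOn f (Icc a b)) (hderiv : ∀ x ∈ Ioo a b, HasDerivAt f (F x) x)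
    (hφ : ∀ x ∈ Ioo a b, 0 ≤ φ x) (hφF : ∀ x ∈ Ioo a b, φ x ≤ F x) :
    ∫ x in a..b, φ x ≤ f b - f a := by
  have hderiv' := fun x hx => (hderiv x hx).hasDerivWithinAt (s := Ioi x)
  by_cases hint : IntegrableOn φ (Icc a b)
  · exact intervalIntegral.integral_le_sub_of_hasDeriv_right_of_le hab hf hderiv' hint hφF
  -- Without integrability the integral is the junk value `0`; then `F ≥ 0` still gives the bound.
  · rw [intervalIntegral.integral_undef
      (by rwa [intervalIntegrable_iff_integrableOn_Icc_of_le hab])]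
    simpa using intervalIntegral.integral_le_sub_of_hasDeriv_right_of_le (φ := 0) hab hf hderiv'
      integrableOn_zero fun x hx => (hφ x hx).trans (hφF x hx)

theorem integral_le_sub_of_hasDerivAt_of_le_off_subsingleton {f F φ : ℝ → ℝ} {a b : ℝ}
    {S : Set ℝ} (hab : a ≤ b) (hS : S.Subsingleton) (hf : ContinuousOn f (Icc a b))
    (hderiv : ∀ x ∈ Ioo a b, x ∉ S → HasDerivAt f (F x) x)
    (hφ : ∀ x ∈ Ioo a b, x ∉ S → 0 ≤ φ x) (hφF : ∀ x ∈ Ioo a b, x ∉ S → φ x ≤ F x) :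
    ∫ x in a..b, φ x ≤ f b - f a := by
  obtain ⟨p, hp⟩ : ∃ p, S ⊆ {p} := by
    rcases hS.eq_empty_or_singleton with rfl | ⟨p, rfl⟩
    exacts [⟨0, empty_subset _⟩, ⟨p, subset_rfl⟩]
  set q := max a (min p b)
  have haq : a ≤ q := le_max_left _ _
  have hqb : q ≤ b := max_le hab (min_le_right _ _)
  have hgood : ∀ x ∈ Ioo a q ∪ Ioo q b,
      HasDerivAt f (F x) x ∧ 0 ≤ φ x ∧ φ x ≤ F x := by
    intro x hx
    have hxab : x ∈ Ioo a b := by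
      rcases hx with hx | hx
      exacts [⟨hx.1, hx.2.trans_le hqb⟩, ⟨haq.trans_lt hx.1, hx.2⟩]
    have hxS : x ∉ S := fun hxS => by
      obtain rfl : x = p := hp hxS
      simp only [q, mem_union, mem_Ioo, lt_max_iff, max_lt_iff, lt_min_iff, min_lt_iff] at hx
      grind
    exact ⟨hderiv x hxab hxS, hφ x hxab hxS, hφF x hxab hxS⟩
  have piece : ∀ {u w : ℝ} {ψ : ℝ → ℝ}, u ≤ w → Icc u w ⊆ Icc a b →
      Ioo u w ⊆ Ioo a q ∪ Ioo q b → (∀ x ∈ Ioo u w, 0 ≤ ψ x ∧ ψ x ≤ F x) → ∫ x in u..w, ψ x ≤ f w - f u :=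
    fun huw hsub hgood' hψ => integral_le_sub_of_hasDerivAt_of_le huw (hf.mono hsub)
      (fun x hx => (hgood x (hgood' hx)).1) (fun x hx => (hψ x hx).1) (fun x hx => (hψ x hx).2)
  have hsub₁ : Icc a q ⊆ Icc a b := Icc_subset_Icc le_rfl hqb
  have hsub₂ : Icc q b ⊆ Icc a b := Icc_subset_Icc haq le_rfl
  have hgood₁ : Ioo a q ⊆ Ioo a q ∪ Ioo q b := subset_union_left
  have hgood₂ : Ioo q b ⊆ Ioo a q ∪ Ioo q b := subset_union_right
  by_cases hint : IntervalIntegrable φ volume a b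
  · rw [← intervalIntegral.integral_add_adjacent_intervals
      (hint.mono_set (c := a) (d := q) (by rwa [uIcc_of_le haq, uIcc_of_le hab]))
      (hint.mono_set (c := q) (d := b) (by rwa [uIcc_of_le hqb, uIcc_of_le hab]))]
    have h₁ := piece haq hsub₁ hgood₁ fun x hx => (hgood x (hgood₁ hx)).2
    have h₂ := piece hqb hsub₂ hgood₂ fun x hx => (hgood x (hgood₂ hx)).2
    linarith
  · rw [intervalIntegral.integral_undef hint]
    have h₁ := piece (ψ := 0) haq hsub₁ hgood₁ fun x hx =>
      ⟨le_rfl, (hgood x (hgood₁ hx)).2.1.trans (hgood x (hgood₁ hx)).2.2⟩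
    have h₂ := piece (ψ := 0) hqb hsub₂ hgood₂ fun x hx =>
      ⟨le_rfl, (hgood x (hgood₂ hx)).2.1.trans (hgood x (hgood₂ hx)).2.2⟩
    simp only [Pi.zero_apply, intervalIntegral.integral_zero] at h₁ h₂
    linarith

theorem stmt_7_general (N n : ℕ) (a : ℝ → ℝ) (hapos : ∀ t > 0, 0 < a t)
    (haC1 : ContDiffOn ℝ 1 a (Set.Ioi 0))
    (ia : ℝ) (hia : -1 < ia)
    (hinf : ∀ t > 0, ia ≤ t * deriv a t / a t)
    (A : EuclideanSpace ℝ (Fin N × Fin n) → EuclideanSpace ℝ (Fin N × Fin n))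
    (hA : ∀ ξ, ξ ≠ 0 → A ξ = a ‖ξ‖ • ξ) (hA0 : A 0 = 0)
    (ξ η : EuclideanSpace ℝ (Fin N × Fin n)) :
    (inner ℝ (A ξ - A η) (ξ - η) : ℝ) ≥
      (1 + min ia 0) * ‖ξ - η‖^2 * ∫ s in (0:ℝ)..1, a ‖η + s • (ξ - η)‖ := by
  set v := ξ - η
  rcases eq_or_ne v 0 with hv | hv
  · simp [hv]
  have hd : ∀ t > 0, HasDerivAt a (deriv a t) t := fun t ht =>
    ((haC1.differentiableOn one_ne_zero t ht).differentiableAt (Ioi_mem_nhds ht)).hasDerivAt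
  have hi : ∀ t > 0, ia * a t ≤ t * deriv a t := fun t ht =>
    (le_div_iff₀ (hapos t ht)).1 (hinf t ht)
  have hA' : ∀ x, A x = a ‖x‖ • x := fun x => by
    rcases eq_or_ne x 0 with rfl | hx
    exacts [by simp [hA0], hA x hx]
  have hcont : Continuous fun x : EuclideanSpace ℝ (Fin N × Fin n) => a ‖x‖ • x :=
    continuous_smul_norm haC1.continuousOn hia fun t ht => by
      rw [abs_of_pos (hapos t ht.1)]; exact le_mul_rpow_of_le_one hd hi ht.1 ht.2
  have hc : 0 ≤ 1 + min ia 0 := by linarith [lt_min hia (neg_one_lt_zero : (-1 : ℝ) < 0)]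
  have key := integral_le_sub_of_hasDerivAt_of_le_off_subsingleton zero_le_one
    (subsingleton_setOf_add_smul_eq_zero hv)
    (f := fun s : ℝ => ⟪a ‖η + s • v‖ • (η + s • v), v⟫)
    (φ := fun s => (1 + min ia 0) * ‖v‖ ^ 2 * a ‖η + s • v‖)
    ((hcont.comp (by fun_prop)).inner continuous_const).continuousOn
    (fun s _ hs => hasDerivAt_inner_smul_norm_add_smul hs (hd _ (norm_pos_iff.2 hs)))
    (fun s _ hs => mul_nonneg (mul_nonneg hc (sq_nonneg _)) (hapos _ (norm_pos_iff.2 hs)).le)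
    (fun s _ hs => one_add_min_mul_le_add_mul_sq_div (norm_pos_iff.2 hs)
      (hapos _ (norm_pos_iff.2 hs)) (hi _ (norm_pos_iff.2 hs)) (abs_real_inner_le_norm _ _))
  rw [intervalIntegral.integral_const_mul] at key
  simpa [← hA', inner_sub_left, v] using key

theorem stmt_7 (N n : ℕ) (a : ℝ → ℝ) (hapos : ∀ t > 0, 0 < a t)
    (haC1 : ContDiffOn ℝ 1 a (Set.Ioi 0))
    (ia sa : ℝ) (hia : -1 < ia) (hisa : ia ≤ sa)
    (hinf : ∀ t > 0, ia ≤ t * deriv a t / a t)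
    (hsup : ∀ t > 0, t * deriv a t / a t ≤ sa)
    (A : EuclideanSpace ℝ (Fin N × Fin n) → EuclideanSpace ℝ (Fin N × Fin n))
    (hA : ∀ ξ, ξ ≠ 0 → A ξ = a ‖ξ‖ • ξ) (hA0 : A 0 = 0)
    (ξ η : EuclideanSpace ℝ (Fin N × Fin n)) :
    (inner ℝ (A ξ - A η) (ξ - η) : ℝ) ≥
      (1 + min ia 0) * ‖ξ - η‖^2 * ∫ s in (0:ℝ)..1, a ‖η + s • (ξ - η)‖ :=
  stmt_7_general N n a hapos haC1 ia hia hinf A hA hA0 ξ η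
end

section
/- Let $a : (0,\infty)\to(0,\infty)$ be non-decreasing. Then for all $\xi, \eta \in \mathbb{R}^{Nn}\setminus\{0\}$: $[a(|\xi|)\xi - a(|\eta|)\eta]\cdot(\xi - \eta) \ge \frac{1}{3}\,[a(|\xi|)+a(|\eta|)]\,|\xi-\eta|^2$. -/
/-! With `x = ‖ξ‖`, `y = ‖η‖`, `A = a x`, `B = a y`, three times the difference of the two sides is
`(x - y) (A - B) (x + 2y) + A (x - y)² + (A + B) (x y - ⟪ξ, η⟫)`.
The first term is nonnegative because `a` is non-decreasing, the last one by Cauchy–Schwarz. -/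

open RealInnerProductSpace

lemma MonotoneOn.mul_sub_nonneg {f : ℝ → ℝ} {s : Set ℝ} (hf : MonotoneOn f s) {x y : ℝ}
    (hx : x ∈ s) (hy : y ∈ s) : 0 ≤ (x - y) * (f x - f y) := by
  rcases le_total y x with hyx | hxy
  · exact mul_nonneg (sub_nonneg.2 hyx) (sub_nonneg.2 (hf hy hx hyx))
  · exact mul_nonneg_of_nonpos_of_nonpos (sub_nonpos.2 hxy) (sub_nonpos.2 (hf hx hy hxy))

section InnerProductSpace

variable {E : Type*} [NormedAddCommGroup E] [InnerProductSpace ℝ E]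

lemma real_inner_smul_sub_smul_sub (A B : ℝ) (ξ η : E) :
    ⟪A • ξ - B • η, ξ - η⟫ = A * ‖ξ‖ ^ 2 - (A + B) * ⟪ξ, η⟫ + B * ‖η‖ ^ 2 := by
  simp only [inner_sub_left, inner_sub_right, real_inner_smul_left, real_inner_self_eq_norm_sq,
    real_inner_comm ξ η]
  ring

lemma third_mul_norm_sub_sq_le_real_inner_smul_sub_smul {A B : ℝ} (hA : 0 ≤ A) (hB : 0 ≤ B)
    {ξ η : E} (hmono : 0 ≤ (‖ξ‖ - ‖η‖) * (A - B)) :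
    1 / 3 * (A + B) * ‖ξ - η‖ ^ 2 ≤ ⟪A • ξ - B • η, ξ - η⟫ := by
  have hcs : 0 ≤ (A + B) * (‖ξ‖ * ‖η‖ - ⟪ξ, η⟫) :=
    mul_nonneg (by positivity) (sub_nonneg.2 (real_inner_le_norm ξ η))
  have hgap : 0 ≤ (‖ξ‖ - ‖η‖) * (A - B) * (‖ξ‖ + 2 * ‖η‖) + A * (‖ξ‖ - ‖η‖) ^ 2 :=
    add_nonneg (mul_nonneg hmono (by positivity)) (by positivity)
  rw [real_inner_smul_sub_smul_sub, norm_sub_sq_real]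
  linear_combination (hgap + hcs) / 3

end InnerProductSpace

theorem stmt_8 (N n : ℕ) (a : ℝ → ℝ) (hapos : ∀ t > 0, 0 < a t)
    (hmono : ∀ s t : ℝ, 0 < s → s ≤ t → a s ≤ a t)
    (ξ η : EuclideanSpace ℝ (Fin N × Fin n)) (hξ : ξ ≠ 0) (hη : η ≠ 0) :
    (inner ℝ (a ‖ξ‖ • ξ - a ‖η‖ • η) (ξ - η) : ℝ) ≥
      (1/3) * (a ‖ξ‖ + a ‖η‖) * ‖ξ - η‖^2 := by
  have hmonoOn : MonotoneOn a (Set.Ioi 0) := fun s hs t _ hst => hmono s t hs hst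
  have hξpos : 0 < ‖ξ‖ := norm_pos_iff.2 hξ
  have hηpos : 0 < ‖η‖ := norm_pos_iff.2 hη
  exact third_mul_norm_sub_sq_le_real_inner_smul_sub_smul (hapos _ hξpos).le (hapos _ hηpos).le
    (hmonoOn.mul_sub_nonneg hξpos hηpos)
end

section
/- Let $a : (0,\infty)\to(0,\infty)$ be $C^1$ with $-1 < i_a \le s_a < \infty$, and for $\varepsilon \in (0,1)$ let $a_\varepsilon(t) = \frac{a(\sqrt{\varepsilon + t^2}) + \varepsilon}{1 + \varepsilon a(\sqrt{\varepsilon + t^2})}$. Then $\min\{i_a, 0\} \le \inf_{t>0} \frac{t\,a_\varepsilon'(t)}{a_\varepsilon(t)}$ and $\sup_{t>0} \frac{t\,a_\varepsilon'(t)}{a_\varepsilon(t)} \le \max\{s_a, 0\}$. -/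
/-!
Write `a_ε = φ ∘ a ∘ g` with `g t = √(ε + t²)` and the Möbius map `φ u = (u + ε) / (1 + ε u)`.
Elasticities `t f'(t) / f(t)` multiply under composition, and those of `g` and `φ` lie in `[0, 1]`
(they equal `t² / (ε + t²)` and `u (1 - ε²) / ((u + ε)(1 + ε u))`). So the elasticity of `a_ε`
at `t` is the elasticity `q ∈ [i_a, s_a]` of `a` at `g t` times a factor in `[0, 1]`, which lies
between `min q 0` and `max q 0`.
-/

open Set

noncomputable def elasticity (f : ℝ → ℝ) (t : ℝ) : ℝ := t * deriv f t / f t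

theorem elasticity_comp {f g : ℝ → ℝ} {t : ℝ} (hf : DifferentiableAt ℝ f (g t))
    (hg : DifferentiableAt ℝ g t) (hgt : g t ≠ 0) :
    elasticity (f ∘ g) t = elasticity f (g t) * elasticity g t := by
  simp only [elasticity, deriv_comp t hf hg, Function.comp_apply]
  rw [div_mul_div_comm, mul_mul_mul_comm, mul_comm (g t) t, mul_right_comm t,
    mul_div_mul_right _ _ hgt]

theorem elasticity_sqrt_const_add_sq_mem_unitInterval {ε t : ℝ} (hε : 0 ≤ ε) (ht : t ≠ 0) :
    elasticity (fun t => √(ε + t ^ 2)) t ∈ unitInterval := by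
  have hpos : 0 < ε + t ^ 2 := by positivity
  have hderiv : HasDerivAt (fun t => √(ε + t ^ 2)) (t / √(ε + t ^ 2)) t := by
    convert (((hasDerivAt_pow 2 t).const_add ε).sqrt hpos.ne') using 1
    norm_num
    field_simp
  have hval : elasticity (fun t => √(ε + t ^ 2)) t = t ^ 2 / (ε + t ^ 2) := by
    rw [elasticity, hderiv.deriv, mul_div_assoc', div_div, ← sq, Real.mul_self_sqrt hpos.le]
  rw [hval]
  exact ⟨by positivity, (div_le_one hpos).2 (by linarith)⟩

theorem elasticity_mobius_mem_unitInterval {ε u : ℝ} (hε₀ : 0 ≤ ε) (hε₁ : ε ≤ 1) (hu : 0 < u) :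
    elasticity (fun u => (u + ε) / (1 + ε * u)) u ∈ unitInterval := by
  have hD : 0 < 1 + ε * u := by positivity
  have hderiv : HasDerivAt (fun u => (u + ε) / (1 + ε * u)) ((1 - ε ^ 2) / (1 + ε * u) ^ 2) u := by
    refine (((hasDerivAt_id' u).add_const ε).fun_div
      (((hasDerivAt_id' u).const_mul ε).const_add 1) hD.ne').congr_deriv ?_
    ring
  have hval : elasticity (fun u => (u + ε) / (1 + ε * u)) u
      = u * (1 - ε ^ 2) / ((u + ε) * (1 + ε * u)) := by
    rw [elasticity, hderiv.deriv]
    field_simp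
  have hε₂ : 0 ≤ 1 - ε ^ 2 := by nlinarith
  rw [hval]
  refine ⟨by positivity, (div_le_one (by positivity)).2 ?_⟩
  nlinarith [mul_nonneg hε₀ (mul_nonneg hε₀ hu.le), mul_nonneg hε₀ (sq_nonneg u)]

theorem mul_mem_Icc_min_zero_max_zero {m M q c : ℝ} (hm : m ≤ q) (hM : q ≤ M)
    (hc : c ∈ unitInterval) : q * c ∈ Icc (min m 0) (max M 0) := by
  obtain ⟨hc₀, hc₁⟩ := hc
  rcases le_or_gt 0 q with hq | hq
  · exact ⟨(min_le_right m 0).trans (mul_nonneg hq hc₀),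
      (mul_le_of_le_one_right hq hc₁).trans (hM.trans (le_max_left M 0))⟩
  · exact ⟨(min_le_left m 0).trans (hm.trans (by nlinarith)),
      (mul_nonpos_of_nonpos_of_nonneg hq.le hc₀).trans (le_max_right M 0)⟩

theorem stmt_11_general (a : ℝ → ℝ) (hapos : ∀ t > 0, 0 < a t)
    (haC1 : ContDiffOn ℝ 1 a (Set.Ioi 0))
    (ia sa : ℝ)
    (hinf : ∀ t > 0, ia ≤ t * deriv a t / a t)
    (hsup : ∀ t > 0, t * deriv a t / a t ≤ sa)
    (ε : ℝ) (hε : ε ∈ Set.Ioo (0:ℝ) 1)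
    (aε : ℝ → ℝ)
    (haε : ∀ t, aε t = (a (Real.sqrt (ε + t^2)) + ε) / (1 + ε * a (Real.sqrt (ε + t^2)))) :
    ∀ t > (0:ℝ),
      min ia 0 ≤ t * deriv aε t / aε t ∧ t * deriv aε t / aε t ≤ max sa 0 := by
  obtain ⟨hε₀, hε₁⟩ := hε
  intro t ht
  set g : ℝ → ℝ := fun t => √(ε + t ^ 2)
  set φ : ℝ → ℝ := fun u => (u + ε) / (1 + ε * u)
  have hdecomp : aε = φ ∘ (a ∘ g) := funext haε
  have hgt : 0 < g t := Real.sqrt_pos.2 (by positivity)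
  have hagt : 0 < a (g t) := hapos _ hgt
  have hg : DifferentiableAt ℝ g t := by
    show DifferentiableAt ℝ (fun t => √(ε + t ^ 2)) t
    fun_prop (disch := positivity)
  have ha : DifferentiableAt ℝ a (g t) :=
    (haC1.differentiableOn one_ne_zero).differentiableAt (Ioi_mem_nhds hgt)
  have hφ : DifferentiableAt ℝ φ (a (g t)) := by
    show DifferentiableAt ℝ (fun u => (u + ε) / (1 + ε * u)) (a (g t))
    fun_prop (disch := positivity)
  have hsplit : elasticity aε t
      = elasticity a (g t) * (elasticity φ (a (g t)) * elasticity g t) := by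
    rw [hdecomp, elasticity_comp (g := a ∘ g) hφ (ha.comp t hg) hagt.ne',
      elasticity_comp ha hg hgt.ne']
    simp only [Function.comp_apply]
    ring
  have hfactor : elasticity φ (a (g t)) * elasticity g t ∈ unitInterval :=
    unitInterval.mul_mem (elasticity_mobius_mem_unitInterval hε₀.le hε₁.le hagt)
      (elasticity_sqrt_const_add_sq_mem_unitInterval hε₀.le ht.ne')
  show elasticity aε t ∈ Icc (min ia 0) (max sa 0)
  rw [hsplit]
  exact mul_mem_Icc_min_zero_max_zero (hinf _ hgt) (hsup _ hgt) hfactor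

theorem stmt_11 (a : ℝ → ℝ) (hapos : ∀ t > 0, 0 < a t)
    (haC1 : ContDiffOn ℝ 1 a (Set.Ioi 0))
    (ia sa : ℝ) (hia : -1 < ia) (hisa : ia ≤ sa)
    (hinf : ∀ t > 0, ia ≤ t * deriv a t / a t)
    (hsup : ∀ t > 0, t * deriv a t / a t ≤ sa)
    (ε : ℝ) (hε : ε ∈ Set.Ioo (0:ℝ) 1)
    (aε : ℝ → ℝ)
    (haε : ∀ t, aε t = (a (Real.sqrt (ε + t^2)) + ε) / (1 + ε * a (Real.sqrt (ε + t^2)))) :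
    ∀ t > (0:ℝ),
      min ia 0 ≤ t * deriv aε t / aε t ∧ t * deriv aε t / aε t ≤ max sa 0 :=
  stmt_11_general a hapos haC1 ia sa hinf hsup ε hε aε haε
end

section
/- Let $a$ be $C^1$ on $(0,\infty)$ with $-1 < i_a \le s_a < \infty$, and let $b_\varepsilon(t) = t\, a_\varepsilon(t)$ where $a_\varepsilon$ is as above. Then $b_\varepsilon \to b$ uniformly on $[0, M]$ for every $M > 0$ as $\varepsilon \to 0^+$, where $b(t) = t\,a(t)$, $b(0)=0$. -/
/-!
Set `F(ε, t) = t a_ε(t)`; at `ε = 0` this is `t a(t)` for `t ≥ 0`. The map `F` is jointly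
continuous on `[0, ∞)²`. Away from the origin this follows from continuity of `a`. At the origin,
`0 ≤ F(ε, t) ≤ s a(s) + s ε` with `s = √(ε + t²)`. The lower bound on `t a'/a` makes
`log a(t) - i_a log t` nondecreasing, so `a(s) ≤ a(1) s^{i_a}` on `(0, 1]`, and `s a(s) → 0`
because `i_a > -1`. On the compact set `[0, 1] × [0, M]`, `F` is uniformly continuous, which
gives uniform convergence of `F(ε, ·)` to `F(0, ·)` as `ε → 0`.
-/

open Real Set Filter Topology

section LogDerivativeBound

variable {a : ℝ → ℝ} {ia : ℝ}

theorem monotoneOn_log_sub_mul_log (hapos : ∀ t > 0, 0 < a t)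
    (hda : DifferentiableOn ℝ a (Ioi 0)) (hinf : ∀ t > 0, ia ≤ t * deriv a t / a t) :
    MonotoneOn (fun t => log (a t) - ia * log t) (Ioi 0) := by
  have hderiv : ∀ t ∈ Ioi (0 : ℝ), HasDerivAt (fun t => log (a t) - ia * log t)
      (deriv a t / a t - ia * t⁻¹) t := fun t ht =>
    ((hda.differentiableAt (Ioi_mem_nhds ht)).hasDerivAt.log (hapos t ht).ne').sub
      ((hasDerivAt_log (ne_of_gt ht)).const_mul ia)
  refine monotoneOn_of_hasDerivWithinAt_nonneg (convex_Ioi 0)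
    (fun t ht => (hderiv t ht).continuousAt.continuousWithinAt)
    (by rw [interior_Ioi]; exact fun t ht => (hderiv t ht).hasDerivWithinAt) ?_
  rw [interior_Ioi]
  intro t (ht : 0 < t)
  have hlog := hinf t ht
  rw [le_div_iff₀ (hapos t ht)] at hlog
  rw [sub_nonneg, ← div_eq_mul_inv, div_le_div_iff₀ ht (hapos t ht)]
  linarith

theorem le_mul_rpow_of_le_one_s12 (hapos : ∀ t > 0, 0 < a t)
    (hda : DifferentiableOn ℝ a (Ioi 0)) (hinf : ∀ t > 0, ia ≤ t * deriv a t / a t)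
    {t : ℝ} (ht₀ : 0 < t) (ht₁ : t ≤ 1) : a t ≤ a 1 * t ^ ia := by
  have hlog := monotoneOn_log_sub_mul_log hapos hda hinf ht₀ (mem_Ioi.2 one_pos) ht₁
  simp only [log_one, mul_zero, sub_zero] at hlog
  calc a t = exp (log (a t)) := (exp_log (hapos t ht₀)).symm
    _ ≤ exp (log (a 1) + ia * log t) := exp_le_exp.2 (by linarith)
    _ = a 1 * t ^ ia := by
      rw [exp_add, exp_log (hapos 1 one_pos), rpow_def_of_pos ht₀, mul_comm ia]

theorem tendsto_mul_nhdsGE_zero (hapos : ∀ t > 0, 0 < a t)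
    (hda : DifferentiableOn ℝ a (Ioi 0)) (hinf : ∀ t > 0, ia ≤ t * deriv a t / a t)
    (hia : -1 < ia) : Tendsto (fun s => s * a s) (𝓝[≥] 0) (𝓝 0) := by
  have hbound : Tendsto (fun s : ℝ => a 1 * s ^ (1 + ia)) (𝓝[≥] 0) (𝓝 0) := by
    have h := ((continuousAt_rpow_const 0 (1 + ia) (Or.inr (by linarith))).const_mul
      (a 1)).tendsto
    rw [zero_rpow (by linarith), mul_zero] at h
    exact h.mono_left nhdsWithin_le_nhds
  refine squeeze_zero' ?_ ?_ hbound
  · filter_upwards [self_mem_nhdsWithin] with s (hs : 0 ≤ s)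
    rcases hs.eq_or_lt with rfl | hs
    · simp
    · exact (mul_pos hs (hapos s hs)).le
  · filter_upwards [Icc_mem_nhdsGE zero_lt_one] with s ⟨hs₀, hs₁⟩
    rcases hs₀.eq_or_lt with rfl | hs₀
    · rw [zero_rpow (by linarith), mul_zero, zero_mul]
    · calc s * a s ≤ s * (a 1 * s ^ ia) :=
            mul_le_mul_of_nonneg_left (le_mul_rpow_of_le_one_s12 hapos hda hinf hs₀ hs₁) hs₀.le
        _ = a 1 * s ^ (1 + ia) := by rw [rpow_add hs₀, rpow_one]; ring

end LogDerivativeBound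

noncomputable def regularized (a : ℝ → ℝ) (ε t : ℝ) : ℝ :=
  (a √(ε + t ^ 2) + ε) / (1 + ε * a √(ε + t ^ 2))

section Regularized

variable {a : ℝ → ℝ}

theorem mul_regularized_mem_Icc (hapos : ∀ t > 0, 0 < a t) {ε t : ℝ} (hε : 0 ≤ ε)
    (ht : 0 ≤ t) : t * regularized a ε t ∈
      Icc 0 (√(ε + t ^ 2) * a √(ε + t ^ 2) + √(ε + t ^ 2) * ε) := by
  unfold regularized
  have hts : t ≤ √(ε + t ^ 2) := le_sqrt_of_sq_le (by linarith)
  generalize √(ε + t ^ 2) = s at hts ⊢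
  rcases (ht.trans hts).eq_or_lt with hs | hs
  · obtain rfl : t = 0 := le_antisymm (hs ▸ hts) ht
    simp [← hs]
  have has := hapos s hs
  have hden : 1 ≤ 1 + ε * a s := le_add_of_nonneg_right (by positivity)
  have hquot : (a s + ε) / (1 + ε * a s) ≤ a s + ε := div_le_self (by positivity) hden
  refine ⟨by positivity, ?_⟩
  calc t * ((a s + ε) / (1 + ε * a s)) ≤ s * (a s + ε) :=
        mul_le_mul hts hquot (by positivity) hs.le
    _ = s * a s + s * ε := by ring

theorem continuousAt_mul_regularized (hapos : ∀ t > 0, 0 < a t)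
    (hca : ContinuousOn a (Ioi 0)) {ε t : ℝ} (hε : 0 ≤ ε) (hεt : 0 < ε + t ^ 2) :
    ContinuousAt (fun q : ℝ × ℝ => q.2 * regularized a q.1 q.2) (ε, t) := by
  have hs : 0 < √(ε + t ^ 2) := sqrt_pos.2 hεt
  have has : ContinuousAt (fun q : ℝ × ℝ => a √(q.1 + q.2 ^ 2)) (ε, t) :=
    ContinuousAt.comp (f := fun q : ℝ × ℝ => √(q.1 + q.2 ^ 2))
      (hca.continuousAt (Ioi_mem_nhds hs)) (by fun_prop)
  have hden : 1 + ε * a √(ε + t ^ 2) ≠ 0 := by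
    have := hapos _ hs
    positivity
  unfold regularized
  exact continuousAt_snd.mul ((has.add continuousAt_fst).div
    (continuousAt_const.add (continuousAt_fst.mul has)) hden)

theorem continuousWithinAt_mul_regularized_zero (hapos : ∀ t > 0, 0 < a t)
    (hb : Tendsto (fun s => s * a s) (𝓝[≥] 0) (𝓝 0)) :
    ContinuousWithinAt (fun q : ℝ × ℝ => q.2 * regularized a q.1 q.2) (Ici 0 ×ˢ Ici 0) 0 := by
  have hs : Tendsto (fun q : ℝ × ℝ => √(q.1 + q.2 ^ 2)) (𝓝[Ici 0 ×ˢ Ici 0] 0) (𝓝[≥] 0) := by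
    refine tendsto_nhdsWithin_of_tendsto_nhds_of_eventually_within _ ?_
      (Eventually.of_forall fun q => sqrt_nonneg _)
    have h : Continuous (fun q : ℝ × ℝ => √(q.1 + q.2 ^ 2)) := by fun_prop
    simpa using (h.tendsto 0).mono_left nhdsWithin_le_nhds
  have hε : Tendsto (fun q : ℝ × ℝ => √(q.1 + q.2 ^ 2) * q.1) (𝓝[Ici 0 ×ˢ Ici 0] 0) (𝓝 0) := by
    simpa using (hs.mono_right nhdsWithin_le_nhds).mul
      (continuousAt_fst.tendsto.mono_left nhdsWithin_le_nhds)
  have hbound : ∀ᶠ q in 𝓝[Ici 0 ×ˢ Ici 0] (0 : ℝ × ℝ), q.2 * regularized a q.1 q.2 ∈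
      Icc 0 (√(q.1 + q.2 ^ 2) * a √(q.1 + q.2 ^ 2) + √(q.1 + q.2 ^ 2) * q.1) := by
    filter_upwards [self_mem_nhdsWithin] with q ⟨hq₁, hq₂⟩
    exact mul_regularized_mem_Icc hapos hq₁ hq₂
  show Tendsto _ _ (𝓝 (0 * regularized a 0 0))
  rw [zero_mul]
  refine tendsto_of_tendsto_of_tendsto_of_le_of_le' tendsto_const_nhds
    (by simpa using (hb.comp hs).add hε) (hbound.mono fun _ h => h.1) (hbound.mono fun _ h => h.2)

theorem continuousOn_mul_regularized (hapos : ∀ t > 0, 0 < a t)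
    (hca : ContinuousOn a (Ioi 0)) (hb : Tendsto (fun s => s * a s) (𝓝[≥] 0) (𝓝 0)) :
    ContinuousOn (fun q : ℝ × ℝ => q.2 * regularized a q.1 q.2) (Ici 0 ×ˢ Ici 0) := by
  rintro ⟨ε, t⟩ ⟨hε : 0 ≤ ε, ht : 0 ≤ t⟩
  rcases (add_nonneg hε (sq_nonneg t)).eq_or_lt with hεt | hεt
  · obtain ⟨rfl, rfl⟩ : ε = 0 ∧ t = 0 := by
      constructor <;> nlinarith [sq_nonneg t]
    exact continuousWithinAt_mul_regularized_zero hapos hb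
  · exact (continuousAt_mul_regularized hapos hca hε hεt).continuousWithinAt

end Regularized

theorem stmt_12_general (a : ℝ → ℝ) (hapos : ∀ t > 0, 0 < a t)
    (haC1 : ContDiffOn ℝ 1 a (Set.Ioi 0))
    (ia : ℝ) (hia : -1 < ia)
    (hinf : ∀ t > 0, ia ≤ t * deriv a t / a t) :
    ∀ M > (0:ℝ),
      TendstoUniformlyOn
        (fun (ε : ℝ) (t : ℝ) =>
          t * ((a (Real.sqrt (ε + t^2)) + ε) / (1 + ε * a (Real.sqrt (ε + t^2)))))
        (fun t => t * a t)
        (nhdsWithin 0 (Set.Ioo (0:ℝ) 1)) (Set.Icc 0 M) := by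
  intro M _
  have hcont := continuousOn_mul_regularized hapos haC1.continuousOn
    (tendsto_mul_nhdsGE_zero hapos (haC1.differentiableOn one_ne_zero) hinf hia)
  have hunif : UniformContinuousOn (↿fun ε t => t * regularized a ε t) (Icc 0 1 ×ˢ Icc 0 M) :=
    (isCompact_Icc.prod isCompact_Icc).uniformContinuousOn_of_continuous
      (hcont.mono (prod_mono Icc_subset_Ici_self Icc_subset_Ici_self))
  have hlim : EqOn (fun t => t * regularized a 0 t) (fun t => t * a t) (Icc 0 M) :=
    fun t ht => by simp [regularized, sqrt_sq ht.1]
  have h := (hunif.tendstoUniformlyOn ⟨le_rfl, zero_le_one⟩).congr_right hlim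
  exact fun u hu => (h u hu).filter_mono (nhdsWithin_mono 0 Ioo_subset_Icc_self)

theorem stmt_12 (a : ℝ → ℝ) (hapos : ∀ t > 0, 0 < a t)
    (haC1 : ContDiffOn ℝ 1 a (Set.Ioi 0))
    (hmono : MonotoneOn a (Set.Ioi 0) ∨ AntitoneOn a (Set.Ioi 0))
    (ia sa : ℝ) (hia : -1 < ia) (hisa : ia ≤ sa)
    (hinf : ∀ t > 0, ia ≤ t * deriv a t / a t)
    (hsup : ∀ t > 0, t * deriv a t / a t ≤ sa) :
    ∀ M > (0:ℝ),
      TendstoUniformlyOn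
        (fun (ε : ℝ) (t : ℝ) =>
          t * ((a (Real.sqrt (ε + t^2)) + ε) / (1 + ε * a (Real.sqrt (ε + t^2)))))
        (fun t => t * a t)
        (nhdsWithin 0 (Set.Ioo (0:ℝ) 1)) (Set.Icc 0 M) :=
  stmt_12_general a hapos haC1 ia hia hinf
end

section
/- Let $a$ be $C^1$ on $(0,\infty)$ with $-1 < i_a \le s_a < \infty$, $b(t)=a(t)t$, $B(t)=\int_0^t b$, and $\widetilde{B}$ the Young conjugate of $B$. Then there exists a constant $C$ depending only on $i_a, s_a$ such that $\widetilde{B}(b(t)) \le C\, B(t)$ for all $t \ge 0$. -/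
/-!
With `b t = t * a t`: the bound `i_a > -1` makes `b` strictly increasing, so its inverse is at
most `t` on `[0, b t]` and `B̃ (b t) ≤ t * b t`. The bound `s_a` makes `a t * t ^ (-s_a)`
antitone, so `b τ ≥ a t * t ^ (-s_a) * τ ^ (s_a + 1)` on `[0, t]`; integrating gives
`B t ≥ t * b t / (s_a + 2)`. Hence `C = s_a + 2` works.
-/

open Set MeasureTheory intervalIntegral

section RightInverse

variable {b binv : ℝ → ℝ} (hb : StrictMonoOn b (Ici 0))
  (hinv : ∀ s ≥ 0, 0 ≤ binv s ∧ b (binv s) = s)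
include hb hinv

theorem le_of_le_of_rightInverse {s t : ℝ} (hs : 0 ≤ s) (ht : 0 ≤ t) (hst : s ≤ b t) :
    binv s ≤ t := by
  by_contra! h
  have := hb ht (hinv s hs).1 h
  rw [(hinv s hs).2] at this
  linarith

theorem monotoneOn_rightInverse : MonotoneOn binv (Ici 0) := fun _ hs s' hs' hss' =>
  le_of_le_of_rightInverse hb hinv hs (hinv s' hs').1 (hss'.trans_eq (hinv s' hs').2.symm)

theorem integral_rightInverse_le (hb0 : b 0 = 0) {t : ℝ} (ht : 0 ≤ t) :
    ∫ s in (0:ℝ)..b t, binv s ≤ t * b t := by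
  have hbt : 0 ≤ b t := hb0 ▸ hb.monotoneOn self_mem_Ici ht ht
  have hint : IntervalIntegrable binv volume 0 (b t) :=
    ((monotoneOn_rightInverse hb hinv).mono
      (uIcc_of_le hbt ▸ Icc_subset_Ici_self)).intervalIntegrable
  calc ∫ s in (0:ℝ)..b t, binv s ≤ ∫ _ in (0:ℝ)..b t, t :=
        integral_mono_on hbt hint intervalIntegrable_const fun s hs =>
          le_of_le_of_rightInverse hb hinv hs.1 ht hs.2
    _ = t * b t := by simp [mul_comm]

end RightInverse

theorem mul_rpow_div_le_integral {f : ℝ → ℝ} {c p t : ℝ} (hp : -1 < p) (ht : 0 ≤ t)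
    (hf : IntervalIntegrable f volume 0 t) (hle : ∀ x ∈ Icc 0 t, c * x ^ p ≤ f x) :
    c * (t ^ (p + 1) / (p + 1)) ≤ ∫ x in (0:ℝ)..t, f x := by
  have hpow : IntervalIntegrable (fun x : ℝ => c * x ^ p) volume 0 t :=
    (intervalIntegrable_rpow' hp).const_mul c
  calc c * (t ^ (p + 1) / (p + 1)) = ∫ x in (0:ℝ)..t, c * x ^ p := by
        rw [intervalIntegral.integral_const_mul, integral_rpow (Or.inl hp),
          Real.zero_rpow (by linarith : p + 1 ≠ 0), sub_zero]
    _ ≤ ∫ x in (0:ℝ)..t, f x := integral_mono_on ht hpow hf hle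

section LogDerivative

variable {a : ℝ → ℝ} (hpos : ∀ t > 0, 0 < a t) (hdiff : DifferentiableOn ℝ a (Ioi 0))
include hpos hdiff

theorem strictMonoOn_id_mul_of_neg_one_lt_logDeriv
    (hlog : ∀ t > 0, -1 < t * deriv a t / a t) :
    StrictMonoOn (fun t => t * a t) (Ici 0) := by
  have hderiv : ∀ x ∈ Ioi (0:ℝ), HasDerivAt (fun t => t * a t) (a x + x * deriv a x) x :=
    fun x hx => by
      simpa [add_comm] using
        (hasDerivAt_id' x).fun_mul (hdiff.differentiableAt (isOpen_Ioi.mem_nhds hx)).hasDerivAt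
  have hIoi : StrictMonoOn (fun t => t * a t) (Ioi 0) := by
    refine strictMonoOn_of_deriv_pos (convex_Ioi 0)
      (fun x hx => (hderiv x hx).continuousAt.continuousWithinAt) fun x hx => ?_
    rw [interior_Ioi] at hx
    rw [(hderiv x hx).deriv]
    have := hlog x hx
    rw [lt_div_iff₀ (hpos x hx)] at this
    linarith
  intro x hx y hy hxy
  rcases (mem_Ici.mp hx).eq_or_lt with rfl | hx0
  · simpa using mul_pos hxy (hpos y hxy)
  · exact hIoi hx0 (hx0.trans hxy) hxy

theorem antitoneOn_mul_rpow_neg_of_logDeriv_le {s : ℝ}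
    (hlog : ∀ t > 0, t * deriv a t / a t ≤ s) :
    AntitoneOn (fun t => a t * t ^ (-s)) (Ioi 0) := by
  have hderiv : ∀ x ∈ Ioi (0:ℝ), HasDerivAt (fun t => a t * t ^ (-s))
      (deriv a x * x ^ (-s) + a x * (-s * x ^ (-s - 1))) x := fun x hx =>
    (hdiff.differentiableAt (isOpen_Ioi.mem_nhds hx)).hasDerivAt.mul
      (Real.hasDerivAt_rpow_const (Or.inl (ne_of_gt hx)))
  refine antitoneOn_of_deriv_nonpos (convex_Ioi 0)
    (fun x hx => (hderiv x hx).continuousAt.continuousWithinAt)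
    (fun x hx => (hderiv x (interior_subset hx)).differentiableAt.differentiableWithinAt)
    fun x hx => ?_
  rw [interior_Ioi] at hx
  rw [(hderiv x hx).deriv]
  have hx0 : (0:ℝ) < x := hx
  have hlx : x * deriv a x ≤ s * a x := by
    have := hlog x hx
    rwa [div_le_iff₀ (hpos x hx)] at this
  have hsplit : x ^ (-s) = x ^ (-s - 1) * x := by
    rw [← Real.rpow_add_one hx0.ne']
    ring_nf
  rw [hsplit]
  nlinarith [Real.rpow_pos_of_pos hx0 (-s - 1)]

theorem mul_self_mul_le_integral {s : ℝ} (hs : -1 < s)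
    (hlog : ∀ t > 0, t * deriv a t / a t ≤ s) {t : ℝ} (ht : 0 ≤ t)
    (hint : IntervalIntegrable (fun τ => τ * a τ) volume 0 t) :
    t * (t * a t) ≤ (s + 2) * ∫ τ in (0:ℝ)..t, τ * a τ := by
  rcases ht.eq_or_lt with rfl | ht0
  · simp
  have hanti := antitoneOn_mul_rpow_neg_of_logDeriv_le hpos hdiff hlog
  have hle : ∀ τ ∈ Icc 0 t, a t * t ^ (-s) * τ ^ (s + 1) ≤ τ * a τ := by
    rintro τ ⟨hτ, hτt⟩
    rcases hτ.eq_or_lt with rfl | hτ0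
    · simp [Real.zero_rpow (by linarith : s + 1 ≠ 0)]
    calc a t * t ^ (-s) * τ ^ (s + 1) ≤ a τ * τ ^ (-s) * τ ^ (s + 1) :=
          mul_le_mul_of_nonneg_right (hanti hτ0 ht0 hτt) (by positivity)
      _ = τ * a τ := by
          rw [mul_assoc, ← Real.rpow_add hτ0]
          norm_num [mul_comm]
  have hbound := mul_rpow_div_le_integral (by linarith) ht hint hle
  have hpow : t ^ (-s) * t ^ (s + 1 + 1) = t * t := by
    rw [← Real.rpow_add ht0, show -s + (s + 1 + 1) = 2 by ring]
    norm_num [sq]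
  have hval : a t * t ^ (-s) * (t ^ (s + 1 + 1) / (s + 1 + 1)) = t * (t * a t) / (s + 2) := by
    rw [mul_div_assoc', mul_assoc, hpow]
    ring
  rw [hval, div_le_iff₀ (by linarith)] at hbound
  linarith

end LogDerivative

theorem stmt_14_general (a : ℝ → ℝ) (hapos : ∀ t > 0, 0 < a t)
    (haC1 : ContDiffOn ℝ 1 a (Set.Ioi 0))
    (ia sa : ℝ) (hia : -1 < ia) (hisa : ia ≤ sa)
    (hinf : ∀ t > 0, ia ≤ t * deriv a t / a t)
    (hsup : ∀ t > 0, t * deriv a t / a t ≤ sa)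
    (binv : ℝ → ℝ)
    (hbinv' : ∀ s ≥ (0:ℝ), 0 ≤ binv s ∧ binv s * a (binv s) = s) :
    ∃ C : ℝ, ∀ t ≥ 0,
      (∫ s in (0:ℝ)..(t * a t), binv s) ≤ C * ∫ τ in (0:ℝ)..t, τ * a τ := by
  have hdiff : DifferentiableOn ℝ a (Ioi 0) := haC1.differentiableOn one_ne_zero
  have hmono : StrictMonoOn (fun t => t * a t) (Ici 0) :=
    strictMonoOn_id_mul_of_neg_one_lt_logDeriv hapos hdiff fun t ht => hia.trans_le (hinf t ht)
  refine ⟨sa + 2, fun t ht => ?_⟩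
  have hint : IntervalIntegrable (fun τ => τ * a τ) volume 0 t :=
    (hmono.monotoneOn.mono (uIcc_of_le ht ▸ Icc_subset_Ici_self)).intervalIntegrable
  calc ∫ s in (0:ℝ)..(t * a t), binv s ≤ t * (t * a t) :=
        integral_rightInverse_le (b := fun t => t * a t) hmono hbinv' (zero_mul _) ht
    _ ≤ (sa + 2) * ∫ τ in (0:ℝ)..t, τ * a τ :=
        mul_self_mul_le_integral hapos hdiff (hia.trans_le hisa) hsup ht hint

theorem stmt_14 (a : ℝ → ℝ) (hapos : ∀ t > 0, 0 < a t)
    (haC1 : ContDiffOn ℝ 1 a (Set.Ioi 0))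
    (ia sa : ℝ) (hia : -1 < ia) (hisa : ia ≤ sa)
    (hinf : ∀ t > 0, ia ≤ t * deriv a t / a t)
    (hsup : ∀ t > 0, t * deriv a t / a t ≤ sa)
    (binv : ℝ → ℝ)
    (hbinv : ∀ t ≥ (0:ℝ), binv (t * a t) = t)
    (hbinv' : ∀ s ≥ (0:ℝ), 0 ≤ binv s ∧ binv s * a (binv s) = s) :
    ∃ C : ℝ, ∀ t ≥ 0,
      (∫ s in (0:ℝ)..(t * a t), binv s) ≤ C * ∫ τ in (0:ℝ)..t, τ * a τ :=
  stmt_14_general a hapos haC1 ia sa hia hisa hinf hsup binv hbinv'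
end

section
/- Let $\Omega \subset \mathbb{R}^n$ be an open set, $a : (0,\infty)\to(0,\infty)$ be $C^1$ with $i_a = \inf_{t>0} t a'(t)/a(t) > -1$, and $\mathbf{v} \in C^3(\Omega, \mathbb{R}^N)$. Then at every point of $\{\nabla \mathbf{v} \ne 0\}$: $\sum_{\alpha=1}^N \Delta v^\alpha\, \mathrm{div}(a(|\nabla\mathbf{v}|)\nabla v^\alpha) \ge \sum_{\alpha=1}^N \mathrm{div}(\Delta v^\alpha\, a(|\nabla\mathbf{v}|)\nabla v^\alpha) - \sum_{\alpha=1}^N\sum_{i,j=1}^n (v^\alpha_{x_i x_j}\, a(|\nabla\mathbf{v}|)\, v^\alpha_{x_i})_{x_j} + (1+\min\{i_a,0\})\, a(|\nabla\mathbf{v}|) \sum_{\alpha=1}^N |\nabla^2 v^\alpha|^2$. -/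
/-- Partial derivative of `f : (Fin n → ℝ) → ℝ` in the `i`-th coordinate direction. -/
noncomputable def pd {n : ℕ} (i : Fin n) (f : (Fin n → ℝ) → ℝ) : (Fin n → ℝ) → ℝ :=
  fun x => fderiv ℝ f x (Pi.single i 1)

/-- Euclidean norm of the full gradient matrix of `v : Fin N → (Fin n → ℝ) → ℝ`. -/
noncomputable def gradNorm {n N : ℕ} (v : Fin N → (Fin n → ℝ) → ℝ) :
    (Fin n → ℝ) → ℝ :=
  fun x => Real.sqrt (∑ α, ∑ i, (pd i (v α) x)^2)

/-!
Write `r = |∇v|` and `E^α = a(r) ∇v^α`. By the product rule and the symmetry of third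
derivatives,
`∑_i (Δv^α E^α_i)_i - ∑_{i,j} (v^α_{ij} E^α_i)_j = Δv^α div E^α - ∑_{i,j} v^α_{ij} ∂_j E^α_i`,
so the claim reduces to a lower bound for the last sum. Since `∂_j r = ∑ v^β_k v^β_{kj} / r`,
`∑ v^α_{ij} ∂_j E^α_i = a'(r)/r ∑_j (∑ v^α_i v^α_{ij})² + a(r) |∇²v|²`.
If `a'(r) < 0`, conclude with Cauchy–Schwarz, `∑_j (∑ v^α_i v^α_{ij})² ≤ r² |∇²v|²`, and with
`r a'(r) ≥ i_a a(r)`.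
-/

section PartialDerivatives

variable {n : ℕ} {f g : (Fin n → ℝ) → ℝ} {x : Fin n → ℝ}

lemma ContDiffAt.pd {m k : WithTop ℕ∞} (i : Fin n) (hf : ContDiffAt ℝ k f x) (hmk : m + 1 ≤ k) :
    ContDiffAt ℝ m (pd i f) x :=
  (hf.fderiv_right hmk).clm_apply contDiffAt_const

lemma pd_mul (i : Fin n) (hf : DifferentiableAt ℝ f x) (hg : DifferentiableAt ℝ g x) :
    pd i (fun y => f y * g y) x = pd i f x * g x + f x * pd i g x := by
  simp only [pd, fderiv_fun_mul hf hg, add_apply, smul_apply, smul_eq_mul]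
  ring

lemma pd_sum {ι : Type*} (s : Finset ι) {F : ι → (Fin n → ℝ) → ℝ} (i : Fin n)
    (hF : ∀ k ∈ s, DifferentiableAt ℝ (F k) x) :
    pd i (fun y => ∑ k ∈ s, F k y) x = ∑ k ∈ s, pd i (F k) x := by
  simp [pd, fderiv_fun_sum hF]

lemma pd_comp {h : ℝ → ℝ} (i : Fin n) (hh : DifferentiableAt ℝ h (f x))
    (hf : DifferentiableAt ℝ f x) :
    pd i (fun y => h (f y)) x = deriv h (f x) * pd i f x := by
  change fderiv ℝ (h ∘ f) x _ = _
  simp [(hh.hasDerivAt.comp_hasFDerivAt x hf.hasFDerivAt).fderiv, pd]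

lemma pd_comm (i j : Fin n) (hf : ContDiffAt ℝ 2 f x) : pd j (pd i f) x = pd i (pd j f) x := by
  have hd : DifferentiableAt ℝ (fderiv ℝ f) x :=
    (hf.fderiv_right (m := 1) (by norm_num)).differentiableAt one_ne_zero
  have second : ∀ k l : Fin n,
      pd l (pd k f) x = fderiv ℝ (fderiv ℝ f) x (Pi.single l 1) (Pi.single k 1) := by
    intro k l
    change fderiv ℝ (fun y => fderiv ℝ f y (Pi.single k 1)) x _ = _
    simp [fderiv_clm_apply hd (differentiableAt_const _)]
  rw [second, second, hf.isSymmSndFDerivAt (by simp)]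

lemma sum_pd_pd_pd_eq_pd_sum_pd_pd (i : Fin n) (hf : ContDiffAt ℝ 3 f x) :
    ∑ j, pd j (pd j (pd i f)) x = pd i (fun y => ∑ j, pd j (pd j f) y) x := by
  have hf₂ : ∀ j, DifferentiableAt ℝ (pd j (pd j f)) x := fun j =>
    ((hf.pd j (m := 2) (by norm_num)).pd j (m := 1) (by norm_num)).differentiableAt one_ne_zero
  rw [pd_sum _ i fun j _ => hf₂ j]
  refine Finset.sum_congr rfl fun j _ => ?_
  have hcomm : pd j (pd i f) =ᶠ[nhds x] pd i (pd j f) := by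
    filter_upwards [hf.eventually (by simp)] with y hy
    exact pd_comm i j (hy.of_le (by norm_num))
  calc pd j (pd j (pd i f)) x = pd j (pd i (pd j f)) x := by simp only [pd, hcomm.fderiv_eq]
    _ = pd i (pd j (pd j f)) x := pd_comm i j (hf.pd j (by norm_num))

end PartialDerivatives

section Divergence

variable {n : ℕ} {u : (Fin n → ℝ) → ℝ} {x : Fin n → ℝ}

lemma sum_pd_lap_mul_sub_sum_pd_hessian_mul {F : Fin n → (Fin n → ℝ) → ℝ}
    (hu : ContDiffAt ℝ 3 u x) (hF : ∀ i, DifferentiableAt ℝ (F i) x) :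
    ∑ i, pd i (fun y => (∑ j, pd j (pd j u) y) * F i y) x
        - ∑ i, ∑ j, pd j (fun y => pd j (pd i u) y * F i y) x
      = (∑ i, pd i (pd i u) x) * ∑ i, pd i (F i) x
        - ∑ i, ∑ j, pd j (pd i u) x * pd j (F i) x := by
  have hu₂ : ∀ i j, DifferentiableAt ℝ (pd j (pd i u)) x := fun i j =>
    ((hu.pd i (m := 2) (by norm_num)).pd j (m := 1) (by norm_num)).differentiableAt one_ne_zero
  have hlap : DifferentiableAt ℝ (fun y => ∑ j, pd j (pd j u) y) x :=
    DifferentiableAt.fun_sum fun j _ => hu₂ j j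
  have hΔF : ∀ i, pd i (fun y => (∑ j, pd j (pd j u) y) * F i y) x
      = pd i (fun y => ∑ j, pd j (pd j u) y) x * F i x + (∑ j, pd j (pd j u) x) * pd i (F i) x :=
    fun i => pd_mul i hlap (hF i)
  have hHF : ∀ i j, pd j (fun y => pd j (pd i u) y * F i y) x
      = pd j (pd j (pd i u)) x * F i x + pd j (pd i u) x * pd j (F i) x :=
    fun i j => pd_mul j (hu₂ i j) (hF i)
  simp only [hΔF, hHF, Finset.sum_add_distrib, ← Finset.sum_mul,
    sum_pd_pd_pd_eq_pd_sum_pd_pd _ hu, ← Finset.mul_sum]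
  ring

end Divergence

section GradientNorm

variable {n N : ℕ} {v : Fin N → (Fin n → ℝ) → ℝ} {x : Fin n → ℝ}

lemma sq_gradNorm : gradNorm v x ^ 2 = ∑ α, ∑ i, pd i (v α) x ^ 2 :=
  Real.sq_sqrt (by positivity)

lemma hasDerivAt_sqrt_gradNorm (hr : gradNorm v x ≠ 0) :
    HasDerivAt Real.sqrt (1 / (2 * gradNorm v x)) (∑ α, ∑ i, pd i (v α) x ^ 2) := by
  refine Real.hasDerivAt_sqrt fun h => hr ?_
  simp [gradNorm, h]

lemma differentiableAt_gradNorm (hv : ∀ α i, DifferentiableAt ℝ (pd i (v α)) x)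
    (hr : gradNorm v x ≠ 0) : DifferentiableAt ℝ (gradNorm v) x :=
  (hasDerivAt_sqrt_gradNorm hr).differentiableAt.comp x <|
    DifferentiableAt.fun_sum fun α _ => DifferentiableAt.fun_sum fun i _ => (hv α i).pow 2

lemma pd_gradNorm (hv : ∀ α i, DifferentiableAt ℝ (pd i (v α)) x) (hr : gradNorm v x ≠ 0)
    (j : Fin n) :
    pd j (gradNorm v) x = (∑ α, ∑ i, pd i (v α) x * pd j (pd i (v α)) x) / gradNorm v x := by
  have hsq : ∀ α i,
      pd j (fun y => pd i (v α) y ^ 2) x = 2 * pd i (v α) x * pd j (pd i (v α)) x :=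
    fun α i => by simp [pd_comp (h := fun t => t ^ 2) j (differentiableAt_pow 2) (hv α i)]
  have hQα : ∀ α, DifferentiableAt ℝ (fun y => ∑ i, pd i (v α) y ^ 2) x :=
    fun α => DifferentiableAt.fun_sum fun i _ => (hv α i).pow 2
  have hQαpd : ∀ α, pd j (fun y => ∑ i, pd i (v α) y ^ 2) x
      = 2 * ∑ i, pd i (v α) x * pd j (pd i (v α)) x := fun α => by
    rw [pd_sum (F := fun i y => pd i (v α) y ^ 2) _ j fun i _ => (hv α i).pow 2]
    simp only [hsq, mul_assoc, ← Finset.mul_sum]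
  change pd j (fun y => Real.sqrt (∑ α, ∑ i, pd i (v α) y ^ 2)) x = _
  rw [pd_comp j (hasDerivAt_sqrt_gradNorm hr).differentiableAt
      (DifferentiableAt.fun_sum fun α _ => hQα α),
    (hasDerivAt_sqrt_gradNorm hr).deriv,
    pd_sum (F := fun α y => ∑ i, pd i (v α) y ^ 2) _ j fun α _ => hQα α]
  simp only [hQαpd, ← Finset.mul_sum]
  field_simp

lemma sum_hessian_mul_pd_flux {a : ℝ → ℝ} (hv : ∀ α i, DifferentiableAt ℝ (pd i (v α)) x)
    (hr : gradNorm v x ≠ 0) (ha : DifferentiableAt ℝ a (gradNorm v x)) :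
    ∑ α, ∑ i, ∑ j, pd j (pd i (v α)) x * pd j (fun y => a (gradNorm v y) * pd i (v α) y) x
      = deriv a (gradNorm v x) / gradNorm v x *
          ∑ j, (∑ α, ∑ i, pd i (v α) x * pd j (pd i (v α)) x) ^ 2
        + a (gradNorm v x) * ∑ α, ∑ i, ∑ j, pd j (pd i (v α)) x ^ 2 := by
  have hterm : ∀ α i j,
      pd j (pd i (v α)) x * pd j (fun y => a (gradNorm v y) * pd i (v α) y) x
        = deriv a (gradNorm v x) / gradNorm v x *
            ((∑ β, ∑ k, pd k (v β) x * pd j (pd k (v β)) x) *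
              (pd i (v α) x * pd j (pd i (v α)) x))
          + a (gradNorm v x) * pd j (pd i (v α)) x ^ 2 := by
    intro α i j
    rw [pd_mul (f := fun y => a (gradNorm v y)) j
        (ha.comp x (differentiableAt_gradNorm hv hr)) (hv α i),
      pd_comp j ha (differentiableAt_gradNorm hv hr), pd_gradNorm hv hr]
    ring
  simp only [hterm, Finset.sum_add_distrib, ← Finset.mul_sum]
  rw [Finset.sum_comm_cycle]
  simp only [← Finset.mul_sum, sq]

end GradientNorm

lemma sum_sq_sum_sum_mul_le {ι κ μ : Type*} [Fintype ι] [Fintype κ] [Fintype μ]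
    (g : ι → κ → ℝ) (H : ι → κ → μ → ℝ) :
    ∑ j, (∑ α, ∑ i, g α i * H α i j) ^ 2 ≤ (∑ α, ∑ i, g α i ^ 2) * ∑ α, ∑ i, ∑ j, H α i j ^ 2 :=
  calc ∑ j, (∑ α, ∑ i, g α i * H α i j) ^ 2
      ≤ ∑ j, (∑ α, ∑ i, g α i ^ 2) * ∑ α, ∑ i, H α i j ^ 2 :=
        Finset.sum_le_sum fun j _ => by
          simpa only [Fintype.sum_prod_type] using Finset.sum_mul_sq_le_sq_mul_sq Finset.univ
            (fun p : ι × κ => g p.1 p.2) (fun p => H p.1 p.2 j)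
    _ = (∑ α, ∑ i, g α i ^ 2) * ∑ α, ∑ i, ∑ j, H α i j ^ 2 := by
        rw [← Finset.mul_sum, ← Finset.sum_comm_cycle]

lemma min_mul_mul_le_div_mul {ia A A' r S T : ℝ} (hA : 0 < A) (hr : 0 < r)
    (hia : ia * A ≤ r * A') (hS : 0 ≤ S) (hT : 0 ≤ T) (hTS : T ≤ r ^ 2 * S) :
    min ia 0 * A * S ≤ A' / r * T := by
  rcases le_or_gt 0 A' with hA' | hA'
  · calc min ia 0 * A * S ≤ 0 :=
          mul_nonpos_of_nonpos_of_nonneg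
            (mul_nonpos_of_nonpos_of_nonneg (min_le_right _ _) hA.le) hS
      _ ≤ A' / r * T := by positivity
  · calc min ia 0 * A * S ≤ ia * A * S := by gcongr; exact min_le_left _ _
      _ ≤ r * A' * S := by gcongr
      _ = A' / r * (r ^ 2 * S) := by field_simp
      _ ≤ A' / r * T :=
          mul_le_mul_of_nonpos_left hTS (div_nonpos_of_nonpos_of_nonneg hA'.le hr.le)

theorem stmt_17_general (n N : ℕ) (Ω : Set (Fin n → ℝ)) (hΩ : IsOpen Ω)
    (a : ℝ → ℝ) (hapos : ∀ t > 0, 0 < a t)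
    (haC1 : ContDiffOn ℝ 1 a (Set.Ioi 0))
    (ia : ℝ)
    (hinf : ∀ t > 0, ia ≤ t * deriv a t / a t)
    (v : Fin N → (Fin n → ℝ) → ℝ)
    (hv : ∀ α, ContDiffOn ℝ 3 (v α) Ω)
    (x : Fin n → ℝ) (hx : x ∈ Ω)
    (hgrad : gradNorm v x ≠ 0) :
    (∑ α, (∑ i, pd i (pd i (v α)) x) *
        (∑ i, pd i (fun y => a (gradNorm v y) * pd i (v α) y) x)) ≥
      (∑ α, ∑ i, pd i (fun y =>
          (∑ j, pd j (pd j (v α)) y) * (a (gradNorm v y) * pd i (v α) y)) x)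
      - (∑ α, ∑ i, ∑ j, pd j (fun y =>
          pd j (pd i (v α)) y * a (gradNorm v y) * pd i (v α) y) x)
      + (1 + min ia 0) * a (gradNorm v x) *
          ∑ α, ∑ i, ∑ j, (pd j (pd i (v α)) x)^2 := by
  have hvx : ∀ α, ContDiffAt ℝ 3 (v α) x := fun α => (hv α).contDiffAt (hΩ.mem_nhds hx)
  have hv₁ : ∀ α i, DifferentiableAt ℝ (pd i (v α)) x := fun α i =>
    ((hvx α).pd i (m := 2) (by norm_num)).differentiableAt two_ne_zero
  have hr : 0 < gradNorm v x := (Real.sqrt_nonneg _).lt_of_ne' hgrad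
  have ha : DifferentiableAt ℝ a (gradNorm v x) :=
    (haC1.contDiffAt (isOpen_Ioi.mem_nhds hr)).differentiableAt one_ne_zero
  have hflux : ∀ α i, DifferentiableAt ℝ (fun y => a (gradNorm v y) * pd i (v α) y) x :=
    fun α i => (ha.comp x (differentiableAt_gradNorm hv₁ hgrad)).mul (hv₁ α i)
  have hdiv : ∀ α, ∑ i, pd i (fun y =>
          (∑ j, pd j (pd j (v α)) y) * (a (gradNorm v y) * pd i (v α) y)) x
        - ∑ i, ∑ j, pd j (fun y => pd j (pd i (v α)) y * a (gradNorm v y) * pd i (v α) y) x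
      = (∑ i, pd i (pd i (v α)) x) * ∑ i, pd i (fun y => a (gradNorm v y) * pd i (v α) y) x
        - ∑ i, ∑ j, pd j (pd i (v α)) x * pd j (fun y => a (gradNorm v y) * pd i (v α) y) x :=
    fun α => by
      simpa only [mul_assoc] using sum_pd_lap_mul_sub_sum_pd_hessian_mul (hvx α) (hflux α)
  have hmin := min_mul_mul_le_div_mul (hapos _ hr) hr
    ((le_div_iff₀ (hapos _ hr)).mp (hinf _ hr)) (by positivity) (by positivity)
    (sq_gradNorm (v := v) ▸ sum_sq_sum_sum_mul_le (fun α i => pd i (v α) x)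
      (fun α i j => pd j (pd i (v α)) x))
  rw [ge_iff_le, ← Finset.sum_sub_distrib]
  simp only [hdiv, Finset.sum_sub_distrib, sum_hessian_mul_pd_flux hv₁ hgrad ha]
  linarith

theorem stmt_17 (n N : ℕ) (Ω : Set (Fin n → ℝ)) (hΩ : IsOpen Ω)
    (a : ℝ → ℝ) (hapos : ∀ t > 0, 0 < a t)
    (haC1 : ContDiffOn ℝ 1 a (Set.Ioi 0))
    (ia : ℝ) (hia : -1 < ia)
    (hinf : ∀ t > 0, ia ≤ t * deriv a t / a t)
    (v : Fin N → (Fin n → ℝ) → ℝ)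
    (hv : ∀ α, ContDiffOn ℝ 3 (v α) Ω)
    (x : Fin n → ℝ) (hx : x ∈ Ω)
    (hgrad : gradNorm v x ≠ 0) :
    (∑ α, (∑ i, pd i (pd i (v α)) x) *
        (∑ i, pd i (fun y => a (gradNorm v y) * pd i (v α) y) x)) ≥
      (∑ α, ∑ i, pd i (fun y =>
          (∑ j, pd j (pd j (v α)) y) * (a (gradNorm v y) * pd i (v α) y)) x)
      - (∑ α, ∑ i, ∑ j, pd j (fun y =>
          pd j (pd i (v α)) y * a (gradNorm v y) * pd i (v α) y) x)
      + (1 + min ia 0) * a (gradNorm v x) *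
          ∑ α, ∑ i, ∑ j, (pd j (pd i (v α)) x)^2 :=
  stmt_17_general n N Ω hΩ a hapos haC1 ia hinf v hv x hx hgrad
end
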